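/- The Hochschild differential is compatible with the Gerstenhaber bracket: for all x ∈ C^m(A,A) and y ∈ C^n(A,A), d[x,y] = (−1)^{n+1}[dx,y] + [x,dy]. In particular, the bracket of two Hochschild cocycles is a cocycle, and the bracket of a cocycle with a coboundary is a coboundary, so the Gerstenhaber bracket descends to Hochschild cohomology. -/
import Mathlib

namespace Hochschild

/-- Hochschild `n`-cochains `C^n(A,A)` are modeled as functions on sequences
`ℕ → A` (with `a i` playing the role of the `(i+1)`-st argument `a_{i+1}`)
that depend only on the first `n` entries and are `K`-multilinear in them. -/
def IsCochain (K : Type*) [Field K] {A : Type*} [Ring A] [Algebra K A]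
    (n : ℕ) (x : (ℕ → A) → A) : Prop :=
  (∀ a b : ℕ → A, (∀ i, i < n → a i = b i) → x a = x b) ∧
  (∀ (a : ℕ → A) (i : ℕ), i < n → ∀ u v : A,
      x (Function.update a i (u + v)) =
        x (Function.update a i u) + x (Function.update a i v)) ∧
  (∀ (a : ℕ → A) (i : ℕ), i < n → ∀ (c : K) (u : A),
      x (Function.update a i (c • u)) = c • x (Function.update a i u))

variable {A : Type*} [Ring A]

/-- The Hochschild differential of a degree-`n` cochain:
`(dx)(a_1,…,a_{n+1}) = a_1 x(a_2,…,a_{n+1}) + ∑_{i=1}^n (−1)^i x(a_1,…,a_i a_{i+1},…,a_{n+1})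
  − (−1)^n x(a_1,…,a_n) a_{n+1}`. -/
def hd (n : ℕ) (x : (ℕ → A) → A) : (ℕ → A) → A := fun a =>
  a 0 * x (fun j => a (j + 1))
    + ∑ i ∈ Finset.range n, ((-1 : ℤ) ^ (i + 1)) •
        x (fun j => if j < i then a j else if j = i then a i * a (i + 1) else a (j + 1))
    - ((-1 : ℤ) ^ n) • (x a * a n)

/-- The cup product `(x·y)(a_1,…,a_{k+l}) = x(a_1,…,a_k) y(a_{k+1},…,a_{k+l})`;
the parameter `m` is the degree of the first factor `x`. -/
def cup (m : ℕ) (x y : (ℕ → A) → A) : (ℕ → A) → A := fun a =>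
  x a * y (fun j => a (j + m))

/-- In the brace substitution determined by the strictly increasing insertion
positions `j`, the index in the ambient input sequence at which the argument
fed into slot `s` of the outer cochain starts; for an inserted cochain at
slot `j p` this is the number `i_p` of inputs preceding it. -/
def braceOff {n : ℕ} (ys : List (ℕ × ((ℕ → A) → A))) (j : Fin ys.length → Fin n)
    (s : ℕ) : ℕ :=
  (s - (Finset.univ.filter fun q : Fin ys.length => (j q : ℕ) < s).card)
    + ∑ q ∈ Finset.univ.filter (fun q : Fin ys.length => (j q : ℕ) < s), (ys.get q).1

/-- The brace operation `{x}{y_1,…,y_m}`, where `x` has degree `n` and the `y_p`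
are listed together with their degrees:
`{x}{y_1,…,y_m}(a_1,…,a_M) = ∑ (−1)^ε x(a_1,…,a_{i_1}, y_1(a_{i_1+1},…),…)`,
the sum being over all order-preserving substitutions of `y_1,…,y_m` into the
slots of `x`, with `ε = ∑_p (|y_p|−1) i_p`. -/
def brace (n : ℕ) (x : (ℕ → A) → A) (ys : List (ℕ × ((ℕ → A) → A))) :
    (ℕ → A) → A := fun a =>
  ∑ j ∈ Finset.univ.filter
      (fun j : Fin ys.length → Fin n => ∀ p q : Fin ys.length, p < q → j p < j q),
    ((-1 : ℤ) ^ (∑ p : Fin ys.length, ((ys.get p).1 + 1) * braceOff ys j (j p))) •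
      x (fun s =>
        (if (Finset.univ.filter fun p : Fin ys.length => (j p : ℕ) = s) = ∅ then
            a (braceOff ys j s)
          else 0)
        + ∑ p ∈ Finset.univ.filter (fun p : Fin ys.length => (j p : ℕ) = s),
            (ys.get p).2 (fun t => a (t + braceOff ys j s)))

/-- The circle product `x ∘ y := {x}{y}`, with `m = |x|`, `p = |y|`. -/
def circ (m p : ℕ) (x y : (ℕ → A) → A) : (ℕ → A) → A := brace m x [(p, y)]

/-- The Gerstenhaber bracket `[x,y] := x∘y − (−1)^{(|x|−1)(|y|−1)} y∘x`,
with `m = |x|`, `p = |y|`. -/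
def gbr (m p : ℕ) (x y : (ℕ → A) → A) : (ℕ → A) → A := fun a =>
  circ m p x y a - ((-1 : ℤ) ^ ((m + 1) * (p + 1))) • circ p m y x a


section Aux
variable {A : Type*} [Ring A]

/-- The multiplication 2-cochain. -/
def mu : (ℕ → A) → A := fun a => a 0 * a 1

/-- Insertion of `y` (of degree `n`) at slot `i`. -/
def ins (n : ℕ) (y : (ℕ → A) → A) (i : ℕ) (a : ℕ → A) : ℕ → A := fun s =>
  if s < i then a s else if s = i then y (fun t => a (t + i)) else a (s - 1 + n)

lemma filter_fin_one {P : Fin 1 → Prop} [DecidablePred P] :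
    Finset.univ.filter P = if P 0 then ({0} : Finset (Fin 1)) else ∅ := by
  split_ifs with h <;> ext q <;>
    simp [Finset.mem_filter, Subsingleton.elim q 0, h]

lemma braceOff_single {m : ℕ} (n : ℕ) (y : (ℕ → A) → A)
    (j : Fin 1 → Fin m) (s : ℕ) :
    braceOff [(n, y)] j s = if (j 0 : ℕ) < s then s - 1 + n else s := by
  show (s - (Finset.univ.filter fun q : Fin 1 => (j q : ℕ) < s).card)
      + ∑ q ∈ Finset.univ.filter (fun q : Fin 1 => (j q : ℕ) < s), ([(n,y)].get q).1 = _
  rw [filter_fin_one]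
  split_ifs with h
  · rw [Finset.card_singleton, Finset.sum_singleton]
    show s - 1 + n = _
    rfl
  · simp

lemma sum_pi_fin_one {M β : Type*} [AddCommMonoid M] [Fintype β]
    (f : (Fin 1 → β) → M) :
    ∑ j : Fin 1 → β, f j = ∑ i : β, f (fun _ => i) :=
  (Fintype.sum_equiv (Equiv.funUnique (Fin 1) β).symm
    (fun i => f (fun _ => i)) f (fun _ => rfl)).symm

lemma circ_eq (m n : ℕ) (x y : (ℕ → A) → A) (a : ℕ → A) :
    circ m n x y a =
      ∑ i ∈ Finset.range m, ((-1 : ℤ)) ^ ((n + 1) * i) • x (ins n y i a) := by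
  rw [circ, brace]
  show (∑ j ∈ Finset.univ.filter
      (fun j : Fin 1 → Fin m => ∀ p q : Fin 1, p < q → j p < j q),
    ((-1 : ℤ) ^ (∑ p : Fin 1, (([(n,y)].get p).1 + 1) * braceOff [(n,y)] j (j p))) •
      x (fun s => (if (Finset.univ.filter fun p : Fin 1 => (j p : ℕ) = s) = ∅ then
            a (braceOff [(n,y)] j s) else 0)
        + ∑ p ∈ Finset.univ.filter (fun p : Fin 1 => (j p : ℕ) = s),
            ([(n,y)].get p).2 (fun t => a (t + braceOff [(n,y)] j s)))) = _
  rw [Finset.filter_true_of_mem (fun j _ => by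
    intro p q hpq
    exact absurd hpq (by rw [Subsingleton.elim p q]; exact lt_irrefl _))]
  rw [sum_pi_fin_one, ← Fin.sum_univ_eq_sum_range]
  refine Finset.sum_congr rfl (fun i _ => ?_)
  have hoff : ∀ s : ℕ, braceOff [(n, y)] (fun _ : Fin 1 => i) s
      = if (i : ℕ) < s then s - 1 + n else s := fun s => braceOff_single n y _ s
  show ((-1 : ℤ) ^ (∑ p : Fin 1, (([(n,y)].get p).1 + 1)
      * braceOff [(n,y)] (fun _ : Fin 1 => i) ((fun _ : Fin 1 => i) p : Fin m))) •
      x (fun s => (if (Finset.univ.filter fun p : Fin 1 => (((fun _ : Fin 1 => i) p : Fin m) : ℕ) = s) = ∅ then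
            a (braceOff [(n,y)] (fun _ : Fin 1 => i) s) else 0)
        + ∑ p ∈ Finset.univ.filter (fun p : Fin 1 => (((fun _ : Fin 1 => i) p : Fin m) : ℕ) = s),
            ([(n,y)].get p).2 (fun t => a (t + braceOff [(n,y)] (fun _ : Fin 1 => i) s))) = _
  congr 1
  · congr 1
    rw [Fin.sum_univ_one]
    show (n + 1) * braceOff [(n,y)] (fun _ : Fin 1 => i) (i : ℕ) = _
    rw [hoff, if_neg (lt_irrefl (i : ℕ))]
  · congr 1
    funext s
    rw [filter_fin_one]
    rcases lt_trichotomy (i : ℕ) s with h | h | h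
    · rw [if_neg (show ¬ (i : ℕ) = s by omega)]
      rw [if_pos rfl, Finset.sum_empty, add_zero, hoff, if_pos h, ins]
      rw [if_neg (by omega), if_neg (by omega)]
    · subst h
      rw [if_pos rfl, if_neg (by simp), Finset.sum_singleton, hoff]
      rw [if_neg (by omega), zero_add, ins, if_neg (by omega), if_pos rfl]
      rfl
    · rw [if_neg (show ¬ (i : ℕ) = s by omega)]
      rw [if_pos rfl, Finset.sum_empty, add_zero, hoff, if_neg (by omega), ins]
      rw [if_pos h]

end Aux
section Aux2
variable {A : Type*} [Ring A]

lemma npc {e f : ℕ} (h : e % 2 = f % 2) : ((-1 : ℤ)) ^ e = (-1) ^ f := by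
  rcases Nat.even_or_odd e with he | he
  · have hf : Even f := Nat.even_iff.mpr (by have := Nat.even_iff.mp he; omega)
    rw [he.neg_one_pow, hf.neg_one_pow]
  · have hf : Odd f := Nat.odd_iff.mpr (by have := Nat.odd_iff.mp he; omega)
    rw [he.neg_one_pow, hf.neg_one_pow]

lemma sps (e f : ℕ) (v : A) :
    ((-1 : ℤ)) ^ e • ((-1 : ℤ)) ^ f • v = ((-1 : ℤ)) ^ (e + f) • v := by
  rw [smul_smul, ← pow_add]

lemma hd_eq (m : ℕ) (x : (ℕ → A) → A) (a : ℕ → A) :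
    hd m x a = ((-1 : ℤ)) ^ (m + 1) • circ 2 m mu x a - circ m 2 x mu a := by
  rw [hd, circ_eq, circ_eq]
  rw [Finset.sum_range_succ, Finset.sum_range_succ, Finset.sum_range_zero, zero_add]
  have h0 : mu (ins m x 0 a) = x a * a m := by
    simp [mu, ins]
  have h1 : mu (ins m x 1 a) = a 0 * x (fun j => a (j + 1)) := by
    simp [mu, ins]
  have h2 : ∀ i : ℕ, ins 2 mu i a
      = fun j => if j < i then a j else if j = i then a i * a (i + 1) else a (j + 1) := by
    intro i; funext s; rw [ins]
    rcases lt_trichotomy s i with h | h | h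
    · rw [if_pos h, if_pos h]
    · subst h
      rw [if_neg (lt_irrefl s), if_pos rfl, if_neg (lt_irrefl s), if_pos rfl]
      simp [mu, Nat.add_comm]
    · rw [if_neg (by omega), if_neg (by omega), if_neg (by omega), if_neg (by omega)]
      congr 1; omega
  rw [h0, h1]
  have h3 : ∑ i ∈ Finset.range m, ((-1 : ℤ)) ^ ((2 + 1) * i) • x (ins 2 mu i a)
      = -∑ i ∈ Finset.range m, ((-1 : ℤ)) ^ (i + 1) •
          x (fun j => if j < i then a j else if j = i then a i * a (i + 1) else a (j + 1)) := by
    rw [← Finset.sum_neg_distrib]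
    refine Finset.sum_congr rfl (fun i _ => ?_)
    rw [h2 i, show ((-1 : ℤ)) ^ ((2 + 1) * i) = (-1) ^ (i + 1 + 1) from npc (by omega),
      pow_succ, mul_neg_one, neg_smul]
  rw [h3, smul_add, sps, sps]
  rw [show ((-1 : ℤ)) ^ (m + 1 + (m + 1) * 0) = (-1) ^ (m + 1) from by ring_nf,
    show ((-1 : ℤ)) ^ (m + 1 + (m + 1) * 1) = 1 from by
      rw [npc (show (m + 1 + (m + 1) * 1) % 2 = 0 % 2 by omega), pow_zero],
    one_smul]
  rw [show ((-1 : ℤ)) ^ (m + 1) • (x a * a m) = -(((-1 : ℤ)) ^ m • (x a * a m)) from by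
    rw [pow_succ, mul_neg_one, neg_smul]]
  abel

end Aux2
section Aux3
variable {A : Type*} [Ring A]

/-- Insertion of `y` (degree `p`) at slot `i` and `z` (degree `q`) at slot `j`, `i < j`. -/
def ins2 (p : ℕ) (y : (ℕ → A) → A) (q : ℕ) (z : (ℕ → A) → A) (i j : ℕ)
    (a : ℕ → A) : ℕ → A := fun s =>
  if s < i then a s
  else if s = i then y (fun t => a (t + i))
  else if s < j then a (s - 1 + p)
  else if s = j then z (fun t => a (t + (j - 1 + p)))
  else a (s - 2 + p + q)

lemma filter_fin_two {P : Fin 2 → Prop} [DecidablePred P] :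
    Finset.univ.filter P = if P 0 then (if P 1 then ({0, 1} : Finset (Fin 2)) else {0})
      else (if P 1 then {1} else ∅) := by
  split_ifs <;> ext t <;> fin_cases t <;> simp_all

lemma sum_pi_fin_two {M β : Type*} [AddCommMonoid M] [Fintype β] (f : (Fin 2 → β) → M) :
    ∑ j : Fin 2 → β, f j = ∑ u : β, ∑ v : β, f (fun t => if t = 0 then u else v) := by
  calc ∑ j : Fin 2 → β, f j
      = ∑ pr : β × β, f (fun t => if t = 0 then pr.1 else pr.2) :=
        Fintype.sum_equiv (piFinTwoEquiv (fun _ => β)) _ _ (fun j => by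
          congr 1; funext t; fin_cases t <;> simp [piFinTwoEquiv])
    _ = _ := Fintype.sum_prod_type _

lemma sum_ite_range {M : Type*} [AddCommMonoid M] {mm j : ℕ} (hj : j ≤ mm) (f : ℕ → M) :
    ∑ i ∈ Finset.range mm, (if i < j then f i else 0) = ∑ i ∈ Finset.range j, f i := by
  rw [← Finset.sum_filter]
  congr 1
  ext k
  simp only [Finset.mem_filter, Finset.mem_range]
  omega

lemma braceOff_pair {m : ℕ} (p q : ℕ) (y z : (ℕ → A) → A) (u v : Fin m)
    (huv : (u : ℕ) < v) (s : ℕ) :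
    braceOff [(p, y), (q, z)] (fun t : Fin 2 => if t = 0 then u else v) s
      = if (v : ℕ) < s then s - 2 + p + q else if (u : ℕ) < s then s - 1 + p else s := by
  show (s - (Finset.univ.filter fun t : Fin 2 =>
        (((fun t : Fin 2 => if t = 0 then u else v) t : Fin m) : ℕ) < s).card)
      + ∑ t ∈ Finset.univ.filter (fun t : Fin 2 =>
        (((fun t : Fin 2 => if t = 0 then u else v) t : Fin m) : ℕ) < s),
          ([(p, y), (q, z)].get t).1 = _
  rw [filter_fin_two]
  rcases lt_trichotomy ((v : ℕ)) s with h | h | h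
  · rw [if_pos (by simpa using (by omega : (u : ℕ) < s)), if_pos (by simpa using h),
      if_pos h]
    rw [show ({0, 1} : Finset (Fin 2)).card = 2 from rfl]
    rw [show ∑ t ∈ ({0, 1} : Finset (Fin 2)), ([(p, y), (q, z)].get t).1 = p + q from by
      rw [Finset.sum_insert (by simp), Finset.sum_singleton]
      rfl]
    omega
  · rw [if_pos (by simpa using (by omega : (u : ℕ) < s)), if_neg (by simpa using (by omega : ¬ (v : ℕ) < s)),
      if_neg (by omega), if_pos (by omega)]
    rw [Finset.card_singleton, Finset.sum_singleton]
    show s - 1 + p = s - 1 + p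
    rfl
  · rcases lt_trichotomy ((u : ℕ)) s with h' | h' | h'
    · rw [if_pos (by simpa using h'), if_neg (by simpa using (by omega : ¬ (v : ℕ) < s)),
        if_neg (by omega), if_pos h']
      rw [Finset.card_singleton, Finset.sum_singleton]
      rfl
    · rw [if_neg (by simpa using (by omega : ¬ (u : ℕ) < s)),
        if_neg (by simpa using (by omega : ¬ (v : ℕ) < s)), if_neg (by omega), if_neg (by omega)]
      simp
    · rw [if_neg (by simpa using (by omega : ¬ (u : ℕ) < s)),
        if_neg (by simpa using (by omega : ¬ (v : ℕ) < s)), if_neg (by omega), if_neg (by omega)]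
      simp

lemma brace2_eq (m p q : ℕ) (x y z : (ℕ → A) → A) (a : ℕ → A) :
    brace m x [(p, y), (q, z)] a
      = ∑ j ∈ Finset.range m, ∑ i ∈ Finset.range j,
          ((-1 : ℤ)) ^ ((p + 1) * i + (q + 1) * (j - 1 + p)) • x (ins2 p y q z i j a) := by
  rw [brace]
  show (∑ j ∈ Finset.univ.filter
      (fun j : Fin 2 → Fin m => ∀ P Q : Fin 2, P < Q → j P < j Q),
    ((-1 : ℤ) ^ (∑ t : Fin 2, (([(p,y),(q,z)].get t).1 + 1) * braceOff [(p,y),(q,z)] j (j t))) •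
      x (fun s => (if (Finset.univ.filter fun t : Fin 2 => (j t : ℕ) = s) = ∅ then
            a (braceOff [(p,y),(q,z)] j s) else 0)
        + ∑ t ∈ Finset.univ.filter (fun t : Fin 2 => (j t : ℕ) = s),
            ([(p,y),(q,z)].get t).2 (fun r => a (r + braceOff [(p,y),(q,z)] j s)))) = _
  rw [Finset.sum_filter, sum_pi_fin_two]
  have key : ∀ u v : Fin m,
      (if (∀ P Q : Fin 2, P < Q → (fun t : Fin 2 => if t = 0 then u else v) P
            < (fun t : Fin 2 => if t = 0 then u else v) Q) then
        ((-1 : ℤ) ^ (∑ t : Fin 2, (([(p,y),(q,z)].get t).1 + 1)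
            * braceOff [(p,y),(q,z)] (fun t : Fin 2 => if t = 0 then u else v)
                ((fun t : Fin 2 => if t = 0 then u else v) t : Fin m))) •
          x (fun s => (if (Finset.univ.filter fun t : Fin 2 =>
                (((fun t : Fin 2 => if t = 0 then u else v) t : Fin m) : ℕ) = s) = ∅ then
                a (braceOff [(p,y),(q,z)] (fun t : Fin 2 => if t = 0 then u else v) s) else 0)
            + ∑ t ∈ Finset.univ.filter (fun t : Fin 2 =>
                (((fun t : Fin 2 => if t = 0 then u else v) t : Fin m) : ℕ) = s),
                ([(p,y),(q,z)].get t).2 (fun r =>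
                  a (r + braceOff [(p,y),(q,z)] (fun t : Fin 2 => if t = 0 then u else v) s)))
        else 0)
      = (if (u : ℕ) < (v : ℕ) then
          ((-1 : ℤ)) ^ ((p + 1) * (u : ℕ) + (q + 1) * ((v : ℕ) - 1 + p)) • x (ins2 p y q z (u : ℕ) (v : ℕ) a)
        else 0) := by
    intro u v
    by_cases huv : (u : ℕ) < (v : ℕ)
    · have hinc : ∀ P Q : Fin 2, P < Q → (fun t : Fin 2 => if t = 0 then u else v) P
          < (fun t : Fin 2 => if t = 0 then u else v) Q := by
        intro P Q hPQ
        have hPv : (P : ℕ) < (Q : ℕ) := Fin.lt_def.mp hPQ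
        have hP2 : (P : ℕ) < 2 := P.isLt
        have hQ2 : (Q : ℕ) < 2 := Q.isLt
        have hP0 : P = 0 := Fin.ext (by simp; omega)
        have hQ1 : Q = 1 := Fin.ext (by simp; omega)
        subst hP0; subst hQ1
        show (if (0 : Fin 2) = 0 then u else v) < (if (1 : Fin 2) = 0 then u else v)
        rw [if_pos rfl, if_neg (by decide)]
        exact Fin.lt_def.mpr huv
      rw [if_pos huv, if_pos hinc]
      have hoff := braceOff_pair p q y z u v huv
      have hc0 : (((fun t : Fin 2 => if t = 0 then u else v) 0 : Fin m) : ℕ) = (u : ℕ) := by simp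
      have hc1 : (((fun t : Fin 2 => if t = 0 then u else v) 1 : Fin m) : ℕ) = (v : ℕ) := by simp
      congr 1
      · congr 1
        rw [Fin.sum_univ_two]
        rw [show (((fun t : Fin 2 => if t = 0 then u else v) 0 : Fin m)) = u from by simp,
          show (((fun t : Fin 2 => if t = 0 then u else v) 1 : Fin m)) = v from by simp]
        rw [hoff, hoff, if_neg (show ¬ (v : ℕ) < (u : ℕ) by omega),
          if_neg (show ¬ (u : ℕ) < (u : ℕ) by omega),
          if_neg (show ¬ (v : ℕ) < (v : ℕ) by omega), if_pos huv]
        rfl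
      · congr 1
        funext s
        rw [filter_fin_two]
        simp only [show ((0 : Fin 2) = 0) = True from eq_true rfl,
          show ((1 : Fin 2) = 0) = False from eq_false (by decide), if_true, if_false]
        rcases lt_trichotomy s (u : ℕ) with h | h | h
        · rw [if_neg (show ¬ (u : ℕ) = s by omega), if_neg (show ¬ (v : ℕ) = s by omega),
            if_pos rfl, Finset.sum_empty, add_zero, hoff, if_neg (by omega), if_neg (by omega),
            ins2, if_pos h]
        · subst h
          rw [if_pos rfl, if_neg (show ¬ (v : ℕ) = (u : ℕ) by omega), if_neg (by simp),
            Finset.sum_singleton, zero_add, hoff, if_neg (by omega), if_neg (by omega),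
            ins2, if_neg (by omega), if_pos rfl]
          rfl
        · rcases lt_trichotomy s (v : ℕ) with h' | h' | h'
          · rw [if_neg (show ¬ (u : ℕ) = s by omega), if_neg (show ¬ (v : ℕ) = s by omega),
              if_pos rfl, Finset.sum_empty, add_zero, hoff, if_neg (by omega), if_pos h,
              ins2, if_neg (by omega), if_neg (by omega), if_pos h']
          · subst h'
            rw [if_neg (show ¬ (u : ℕ) = (v : ℕ) by omega), if_pos rfl, if_neg (by simp),
              Finset.sum_singleton, zero_add, hoff, if_neg (by omega), if_pos h,
              ins2, if_neg (by omega), if_neg (by omega), if_neg (by omega), if_pos rfl]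
            rfl
          · rw [if_neg (show ¬ (u : ℕ) = s by omega), if_neg (show ¬ (v : ℕ) = s by omega),
              if_pos rfl, Finset.sum_empty, add_zero, hoff, if_pos h',
              ins2, if_neg (by omega), if_neg (by omega), if_neg (by omega), if_neg (by omega)]
    · rw [if_neg huv, if_neg (fun hc => by
        have h1 : u < v := by simpa using hc 0 1 (by decide)
        exact huv (Fin.lt_def.mp h1))]
  calc _ = ∑ u : Fin m, ∑ v : Fin m,
      (fun (i jj : ℕ) => if i < jj then
          ((-1 : ℤ)) ^ ((p + 1) * i + (q + 1) * (jj - 1 + p)) • x (ins2 p y q z i jj a)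
        else 0) (u : ℕ) (v : ℕ) := by
        refine Finset.sum_congr rfl (fun u _ => Finset.sum_congr rfl (fun v _ => key u v))
    _ = ∑ i ∈ Finset.range m, ∑ jj ∈ Finset.range m,
        (if i < jj then
          ((-1 : ℤ)) ^ ((p + 1) * i + (q + 1) * (jj - 1 + p)) • x (ins2 p y q z i jj a)
        else 0) := by
        rw [← Fin.sum_univ_eq_sum_range]
        refine Finset.sum_congr rfl (fun u _ => ?_)
        rw [← Fin.sum_univ_eq_sum_range]
    _ = _ := by
        rw [Finset.sum_comm]
        refine Finset.sum_congr rfl (fun jj hjj => ?_)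
        exact sum_ite_range (le_of_lt (Finset.mem_range.mp hjj)) _

end Aux3
section Aux4
variable {K : Type*} [Field K] {A : Type*} [Ring A] [Algebra K A]

lemma npc2 {e f M : ℕ} (h : f = e + 2 * M) : ((-1 : ℤ)) ^ f = (-1) ^ e := by
  rw [h, pow_add, pow_mul]
  norm_num

/-- Additivity of a cochain in slot `k` as an `AddMonoidHom`. -/
def slotHom {m : ℕ} {x : (ℕ → A) → A} (hx : IsCochain K m x) {k : ℕ} (hk : k < m)
    (h : ℕ → A) : A →+ A :=
  AddMonoidHom.mk' (fun u => x (Function.update h k u)) (fun u v => by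
    simpa [Function.update_idem] using hx.2.1 h k hk u v)

lemma slotHom_apply {m : ℕ} {x : (ℕ → A) → A} (hx : IsCochain K m x) {k : ℕ}
    (hk : k < m) (h : ℕ → A) (u : A) :
    slotHom hx hk h u = x (Function.update h k u) := rfl

lemma ins_eq_update (n : ℕ) (y : (ℕ → A) → A) (i : ℕ) (a : ℕ → A) :
    ins n y i a = Function.update (ins n (fun _ => 0) i a) i (y (fun t => a (t + i))) := by
  funext s
  rw [Function.update_apply]
  split_ifs with h
  · subst h; rw [ins, if_neg (lt_irrefl s), if_pos rfl]
  · by_cases h2 : s < i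
    · rw [ins, if_pos h2, ins, if_pos h2]
    · rw [ins, if_neg h2, if_neg h, ins, if_neg h2, if_neg h]

lemma fA {p q : ℕ} {y z : (ℕ → A) → A} (a : ℕ → A) (i k : ℕ) (hik : i < k) :
    ins p y k (ins q z i a) = ins2 q z p y i k a := by
  funext s
  rcases lt_trichotomy s i with h | h | h
  · rw [ins, if_pos (by omega), ins, if_pos h, ins2, if_pos h]
  · subst h
    rw [ins, if_pos (by omega), ins, if_neg (by omega), if_pos rfl,
      ins2, if_neg (by omega), if_pos rfl]
  · rcases lt_trichotomy s k with h' | h' | h'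
    · rw [ins, if_pos h', ins, if_neg (by omega), if_neg (by omega),
        ins2, if_neg (by omega), if_neg (by omega), if_pos h']
    · subst h'
      rw [ins, if_neg (by omega), if_pos rfl,
        ins2, if_neg (by omega), if_neg (by omega), if_neg (by omega), if_pos rfl]
      congr 1
      funext t
      rw [ins, if_neg (by omega), if_neg (by omega)]
      congr 1
      omega
    · rw [ins, if_neg (by omega), if_neg (by omega), ins, if_neg (by omega), if_neg (by omega),
        ins2, if_neg (by omega), if_neg (by omega), if_neg (by omega), if_neg (by omega)]
      congr 1
      omega

lemma fB {p q : ℕ} {y z : (ℕ → A) → A} (a : ℕ → A) (k l : ℕ) (hl : l < p)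
    (hpq : 1 ≤ p + q) :
    ins p y k (ins q z (k + l) a)
      = Function.update (ins (p + q - 1) (fun _ => (0 : A)) k a) k
          (y (ins q z l (fun t => a (t + k)))) := by
  funext s
  rw [Function.update_apply]
  rcases lt_trichotomy s k with h | h | h
  · rw [if_neg (by omega), ins, if_pos h, ins, if_pos (by omega), ins, if_pos h]
  · subst h
    rw [if_pos rfl, ins, if_neg (by omega), if_pos rfl]
    congr 1
    funext t
    rcases lt_trichotomy t l with h2 | h2 | h2
    · rw [ins, if_pos (by omega), ins, if_pos h2]
    · subst h2
      rw [ins, if_neg (by omega), if_pos (by omega), ins, if_neg (by omega), if_pos rfl]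
      congr 1
      funext r
      congr 1
      omega
    · rw [ins, if_neg (by omega), if_neg (by omega), ins, if_neg (by omega), if_neg (by omega)]
      congr 1
      omega
  · rw [if_neg (by omega), ins, if_neg (by omega), if_neg (by omega),
      ins, if_neg (by omega), if_neg (by omega), ins, if_neg (by omega), if_neg (by omega)]
    congr 1
    omega

lemma fC {p q : ℕ} {y z : (ℕ → A) → A}
    (hy1 : ∀ a b : ℕ → A, (∀ i, i < p → a i = b i) → y a = y b)
    (a : ℕ → A) (k l : ℕ) :
    ins p y k (ins q z (k + p + l) a) = ins2 p y q z k (k + 1 + l) a := by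
  funext s
  rcases lt_trichotomy s k with h | h | h
  · rw [ins, if_pos h, ins, if_pos (by omega), ins2, if_pos h]
  · subst h
    rw [ins, if_neg (by omega), if_pos rfl, ins2, if_neg (by omega), if_pos rfl]
    refine hy1 _ _ (fun t ht => ?_)
    rw [ins, if_pos (by omega)]
  · rcases lt_trichotomy s (k + 1 + l) with h' | h' | h'
    · rw [ins, if_neg (by omega), if_neg (by omega), ins, if_pos (by omega),
        ins2, if_neg (by omega), if_neg (by omega), if_pos h']
    · subst h'
      rw [ins, if_neg (by omega), if_neg (by omega), ins, if_neg (by omega),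
        if_pos (by omega), ins2, if_neg (by omega), if_neg (by omega), if_neg (by omega),
        if_pos rfl]
      congr 1
      funext t
      congr 1
      omega
    · rw [ins, if_neg (by omega), if_neg (by omega), ins, if_neg (by omega), if_neg (by omega),
        ins2, if_neg (by omega), if_neg (by omega), if_neg (by omega), if_neg (by omega)]
      congr 1
      omega

lemma sum_triangle {M : Type*} [AddCommMonoid M] (mm : ℕ) (f : ℕ → ℕ → M) :
    ∑ j ∈ Finset.range mm, ∑ i ∈ Finset.range j, f i j
      = ∑ k ∈ Finset.range mm, ∑ j ∈ Finset.Ico (k + 1) mm, f k j := by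
  induction mm with
  | zero => simp
  | succ N ih =>
    rw [Finset.sum_range_succ, ih,
      Finset.sum_range_succ (fun k => ∑ j ∈ Finset.Ico (k + 1) (N + 1), f k j),
      Finset.Ico_self, Finset.sum_empty, add_zero, ← Finset.sum_add_distrib]
    refine Finset.sum_congr rfl (fun k hk => ?_)
    exact (Finset.sum_Ico_succ_top (by
      have := Finset.mem_range.mp hk; omega) _).symm

end Aux4
section E2sec
variable {K : Type*} [Field K] {A : Type*} [Ring A] [Algebra K A]

lemma E2 {m : ℕ} {x : (ℕ → A) → A} (hx : IsCochain K m x)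
    (p q : ℕ) (y z : (ℕ → A) → A)
    (hy1 : ∀ a b : ℕ → A, (∀ i, i < p → a i = b i) → y a = y b)
    (hpq : 1 ≤ p + q) (a : ℕ → A) :
    circ (m + p - 1) q (circ m p x y) z a
      = circ m (p + q - 1) x (circ p q y z) a
        + brace m x [(p, y), (q, z)] a
        + ((-1 : ℤ)) ^ ((p + 1) * (q + 1)) • brace m x [(q, z), (p, y)] a := by
  have hF : ∀ k i : ℕ,
      ((-1 : ℤ)) ^ ((q + 1) * i) • (((-1 : ℤ)) ^ ((p + 1) * k) • x (ins p y k (ins q z i a)))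
        = ((-1 : ℤ)) ^ ((q + 1) * i + (p + 1) * k) • x (ins p y k (ins q z i a)) :=
    fun k i => sps _ _ _
  have L1 : circ (m + p - 1) q (circ m p x y) z a
      = ∑ k ∈ Finset.range m, ∑ i ∈ Finset.range (m + p - 1),
          ((-1 : ℤ)) ^ ((q + 1) * i + (p + 1) * k) • x (ins p y k (ins q z i a)) := by
    rw [circ_eq]
    rw [show (∑ i ∈ Finset.range (m + p - 1),
        ((-1 : ℤ)) ^ ((q + 1) * i) • (circ m p x y) (ins q z i a))
      = ∑ i ∈ Finset.range (m + p - 1), ∑ k ∈ Finset.range m,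
          ((-1 : ℤ)) ^ ((q + 1) * i + (p + 1) * k) • x (ins p y k (ins q z i a)) from
      Finset.sum_congr rfl (fun i _ => by
        rw [circ_eq, Finset.smul_sum]
        exact Finset.sum_congr rfl (fun k _ => hF k i))]
    exact Finset.sum_comm
  rw [L1]
  have split : ∀ k ∈ Finset.range m,
      (∑ i ∈ Finset.range (m + p - 1),
          ((-1 : ℤ)) ^ ((q + 1) * i + (p + 1) * k) • x (ins p y k (ins q z i a)))
        = (∑ i ∈ Finset.Ico 0 k,
            ((-1 : ℤ)) ^ ((q + 1) * i + (p + 1) * k) • x (ins p y k (ins q z i a)))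
          + ((∑ i ∈ Finset.Ico k (k + p),
              ((-1 : ℤ)) ^ ((q + 1) * i + (p + 1) * k) • x (ins p y k (ins q z i a)))
            + ∑ i ∈ Finset.Ico (k + p) (m + p - 1),
                ((-1 : ℤ)) ^ ((q + 1) * i + (p + 1) * k) • x (ins p y k (ins q z i a))) := by
    intro k hk
    have hk' := Finset.mem_range.mp hk
    rw [Finset.sum_Ico_consecutive _ (by omega : k ≤ k + p) (by omega : k + p ≤ m + p - 1),
      Finset.sum_Ico_consecutive _ (Nat.zero_le k) (by omega : k ≤ m + p - 1),
      Finset.range_eq_Ico]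
  rw [Finset.sum_congr rfl split, Finset.sum_add_distrib, Finset.sum_add_distrib]
  have hA : ∑ k ∈ Finset.range m, ∑ i ∈ Finset.Ico 0 k,
        ((-1 : ℤ)) ^ ((q + 1) * i + (p + 1) * k) • x (ins p y k (ins q z i a))
      = ((-1 : ℤ)) ^ ((p + 1) * (q + 1)) • brace m x [(q, z), (p, y)] a := by
    rw [brace2_eq, Finset.smul_sum]
    refine Finset.sum_congr rfl (fun k hk => ?_)
    rw [Finset.smul_sum, ← Finset.range_eq_Ico]
    refine Finset.sum_congr rfl (fun i hi => ?_)
    have hik := Finset.mem_range.mp hi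
    rw [fA a i k hik, sps]
    congr 1
    obtain ⟨k', rfl⟩ : ∃ k', k = k' + 1 := ⟨k - 1, by omega⟩
    rw [show k' + 1 - 1 + q = k' + q from by omega]
    exact (npc2 (show (p + 1) * (q + 1) + ((q + 1) * i + (p + 1) * (k' + q))
      = ((q + 1) * i + (p + 1) * (k' + 1)) + 2 * ((p + 1) * q) from by ring)).symm
  have hC : ∑ k ∈ Finset.range m, ∑ i ∈ Finset.Ico (k + p) (m + p - 1),
        ((-1 : ℤ)) ^ ((q + 1) * i + (p + 1) * k) • x (ins p y k (ins q z i a))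
      = brace m x [(p, y), (q, z)] a := by
    rw [brace2_eq, sum_triangle]
    refine Finset.sum_congr rfl (fun k hk => ?_)
    have hk' := Finset.mem_range.mp hk
    rw [Finset.sum_Ico_eq_sum_range, Finset.sum_Ico_eq_sum_range,
      show m + p - 1 - (k + p) = m - (k + 1) from by omega]
    refine Finset.sum_congr rfl (fun l hl => ?_)
    rw [show k + p + l = k + p + l from rfl, fC hy1 a k l]
    rw [show k + 1 + l - 1 + p = k + l + p from by omega]
    congr 1
    exact npc2 (show (q + 1) * (k + p + l) + (p + 1) * k
      = ((p + 1) * k + (q + 1) * (k + l + p)) + 2 * 0 from by ring)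
  have hB : ∑ k ∈ Finset.range m, ∑ i ∈ Finset.Ico k (k + p),
        ((-1 : ℤ)) ^ ((q + 1) * i + (p + 1) * k) • x (ins p y k (ins q z i a))
      = circ m (p + q - 1) x (circ p q y z) a := by
    rw [circ_eq]
    refine Finset.sum_congr rfl (fun k hk => ?_)
    have hk' := Finset.mem_range.mp hk
    rw [Finset.sum_Ico_eq_sum_range, show k + p - k = p from by omega]
    rw [ins_eq_update (p + q - 1) (circ p q y z) k a,
      circ_eq p q y z (fun t => a (t + k)),
      ← slotHom_apply hx hk' (ins (p + q - 1) (fun _ => 0) k a), map_sum,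
      Finset.smul_sum]
    refine Finset.sum_congr rfl (fun l hl => ?_)
    rw [map_zsmul, slotHom_apply, sps, fB a k l (Finset.mem_range.mp hl) hpq]
    congr 1
    rw [show p + q - 1 + 1 = p + q from by omega]
    exact npc2 (show (q + 1) * (k + l) + (p + 1) * k
      = ((p + q) * k + (q + 1) * l) + 2 * k from by ring)
  rw [hA, hB, hC]
  abel

end E2sec
section Aux6
variable {K : Type*} [Field K] {A : Type*} [Ring A] [Algebra K A]

lemma hmu : IsCochain K 2 (mu : (ℕ → A) → A) := by
  refine ⟨fun a b h => ?_, fun a i hi u v => ?_, fun a i hi c u => ?_⟩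
  · show a 0 * a 1 = b 0 * b 1
    rw [h 0 (by omega), h 1 (by omega)]
  · interval_cases i <;>
      simp [mu, Function.update_apply, add_mul, mul_add]
  · interval_cases i <;>
      simp [mu, Function.update_apply, smul_mul_assoc, mul_smul_comm]

lemma circ_outer_sub_smul (r s : ℕ) (u v w : (ℕ → A) → A) (c : ℤ) (a : ℕ → A) :
    circ r s (fun b => u b - c • v b) w a = circ r s u w a - c • circ r s v w a := by
  rw [circ_eq, circ_eq, circ_eq, Finset.smul_sum, ← Finset.sum_sub_distrib]
  refine Finset.sum_congr rfl fun i _ => ?_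
  show ((-1 : ℤ)) ^ ((s + 1) * i) • (u (ins s w i a) - c • v (ins s w i a)) = _
  rw [smul_sub, smul_comm]

lemma circ_outer_smul_sub (r s : ℕ) (u v w : (ℕ → A) → A) (c : ℤ) (a : ℕ → A) :
    circ r s (fun b => c • u b - v b) w a = c • circ r s u w a - circ r s v w a := by
  rw [circ_eq, circ_eq, circ_eq, Finset.smul_sum, ← Finset.sum_sub_distrib]
  refine Finset.sum_congr rfl fun i _ => ?_
  show ((-1 : ℤ)) ^ ((s + 1) * i) • (c • u (ins s w i a) - v (ins s w i a)) = _
  rw [smul_sub, smul_comm]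

lemma circ_inner_sub_smul {r : ℕ} {x : (ℕ → A) → A} (hx : IsCochain K r x)
    (s : ℕ) (u v : (ℕ → A) → A) (c : ℤ) (a : ℕ → A) :
    circ r s x (fun b => u b - c • v b) a = circ r s x u a - c • circ r s x v a := by
  rw [circ_eq, circ_eq, circ_eq, Finset.smul_sum, ← Finset.sum_sub_distrib]
  refine Finset.sum_congr rfl fun i hi => ?_
  have hi' := Finset.mem_range.mp hi
  rw [ins_eq_update s _ i a, ins_eq_update s u i a, ins_eq_update s v i a,
    ← slotHom_apply hx hi' (ins s (fun _ => 0) i a),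
    ← slotHom_apply hx hi' (ins s (fun _ => 0) i a),
    ← slotHom_apply hx hi' (ins s (fun _ => 0) i a)]
  show ((-1 : ℤ)) ^ ((s + 1) * i) •
      (slotHom hx hi' (ins s (fun _ => 0) i a)
        (u (fun t => a (t + i)) - c • v (fun t => a (t + i)))) = _
  rw [map_sub, map_zsmul, smul_sub, smul_comm]

lemma circ_inner_smul_sub {r : ℕ} {x : (ℕ → A) → A} (hx : IsCochain K r x)
    (s : ℕ) (u v : (ℕ → A) → A) (c : ℤ) (a : ℕ → A) :
    circ r s x (fun b => c • u b - v b) a = c • circ r s x u a - circ r s x v a := by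
  rw [circ_eq, circ_eq, circ_eq, Finset.smul_sum, ← Finset.sum_sub_distrib]
  refine Finset.sum_congr rfl fun i hi => ?_
  have hi' := Finset.mem_range.mp hi
  rw [ins_eq_update s _ i a, ins_eq_update s u i a, ins_eq_update s v i a,
    ← slotHom_apply hx hi' (ins s (fun _ => 0) i a),
    ← slotHom_apply hx hi' (ins s (fun _ => 0) i a),
    ← slotHom_apply hx hi' (ins s (fun _ => 0) i a)]
  show ((-1 : ℤ)) ^ ((s + 1) * i) •
      (slotHom hx hi' (ins s (fun _ => 0) i a)
        (c • u (fun t => a (t + i)) - v (fun t => a (t + i)))) = _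
  rw [map_sub, map_zsmul, smul_sub, smul_comm]

lemma circ_zero_outer (r s : ℕ) (w : (ℕ → A) → A) (a : ℕ → A) :
    circ r s (fun _ : ℕ → A => (0 : A)) w a = 0 := by
  rw [circ_eq]; simp

lemma circ_zero_inner {r : ℕ} {x : (ℕ → A) → A} (hx : IsCochain K r x)
    (s : ℕ) (a : ℕ → A) :
    circ r s x (fun _ : ℕ → A => (0 : A)) a = 0 := by
  rw [circ_eq]
  refine Finset.sum_eq_zero fun i hi => ?_
  rw [ins_eq_update, ← slotHom_apply hx (Finset.mem_range.mp hi) (ins s (fun _ => 0) i a)]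
  show ((-1 : ℤ)) ^ ((s + 1) * i) •
      (slotHom hx (Finset.mem_range.mp hi) (ins s (fun _ => 0) i a) (0 : A)) = 0
  rw [map_zero, smul_zero]

end Aux6
section Part1
variable {K : Type*} [Field K] {A : Type*} [Ring A] [Algebra K A]

lemma part1 (m n : ℕ) (x y : (ℕ → A) → A)
    (hx : IsCochain K m x) (hy : IsCochain K n y) :
    hd (m + n - 1) (gbr m n x y) = fun a =>
      ((-1 : ℤ) ^ (n + 1)) • gbr (m + 1) n (hd m x) y a
        + gbr m (n + 1) x (hd n y) a := by
  funext a
  by_cases hmn : m = 0 ∧ n = 0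
  · obtain ⟨rfl, rfl⟩ := hmn
    have xc : ∀ b c : ℕ → A, x b = x c :=
      fun b c => hx.1 b c (fun i hi => absurd hi (Nat.not_lt_zero i))
    have yc : ∀ b c : ℕ → A, y b = y c :=
      fun b c => hy.1 b c (fun i hi => absurd hi (Nat.not_lt_zero i))
    have hg : ∀ b : ℕ → A, gbr 0 0 x y b = 0 := by
      intro b
      rw [gbr]
      show circ 0 0 x y b - _ • circ 0 0 y x b = 0
      rw [circ_eq, circ_eq]
      simp
    have hL : hd (0 + 0 - 1) (gbr 0 0 x y) a = 0 := by
      rw [show (0 : ℕ) + 0 - 1 = 0 from rfl, hd]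
      simp [hg]
    rw [hL]
    have hdx : ∀ b : ℕ → A, hd 0 x b = b 0 * x a - x a * b 0 := by
      intro b
      rw [hd]
      simp only [Finset.range_zero, Finset.sum_empty, add_zero, pow_zero, one_smul]
      rw [xc (fun j => b (j + 1)) a, xc b a]
    have hdy : ∀ b : ℕ → A, hd 0 y b = b 0 * y a - y a * b 0 := by
      intro b
      rw [hd]
      simp only [Finset.range_zero, Finset.sum_empty, add_zero, pow_zero, one_smul]
      rw [yc (fun j => b (j + 1)) a, yc b a]
    have c1 : circ 1 0 (hd 0 x) y a = y a * x a - x a * y a := by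
      rw [circ_eq, Finset.sum_range_one]
      simp only [mul_zero, pow_zero, one_smul]
      rw [hdx]
      rw [show ins 0 y 0 a 0 = y (fun t => a (t + 0)) from by rw [ins]; norm_num, yc (fun t => a (t + 0)) a]
    have c2 : circ 1 0 (hd 0 y) x a = x a * y a - y a * x a := by
      rw [circ_eq, Finset.sum_range_one]
      simp only [mul_zero, pow_zero, one_smul]
      rw [hdy]
      rw [show ins 0 x 0 a 0 = x (fun t => a (t + 0)) from by rw [ins]; norm_num, xc (fun t => a (t + 0)) a]
    rw [gbr, gbr]
    show (0 : A) = _ • (circ 1 0 (hd 0 x) y a - _ • circ 0 1 y (hd 0 x) a)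
      + (circ 0 1 x (hd 0 y) a - _ • circ 1 0 (hd 0 y) x a)
    rw [c1, c2, circ_eq, circ_eq, Finset.range_zero, Finset.sum_empty, Finset.sum_empty]
    simp only [pow_one, pow_succ, pow_zero, one_mul, smul_zero, sub_zero, zero_sub, one_smul]
    norm_num
  · have h1 : 1 ≤ m + n := by omega
    rw [hd_eq]
    rw [show gbr m n x y = fun b => circ m n x y b
        - ((-1 : ℤ)) ^ ((m + 1) * (n + 1)) • circ n m y x b from rfl]
    rw [circ_inner_sub_smul (hmu (K := K)), circ_outer_sub_smul]
    simp only [show ∀ b, gbr (m + 1) n (hd m x) y b = circ (m + 1) n (hd m x) y b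
        - ((-1 : ℤ)) ^ ((m + 1 + 1) * (n + 1)) • circ n (m + 1) y (hd m x) b from fun b => rfl]
    simp only [show ∀ b, gbr m (n + 1) x (hd n y) b = circ m (n + 1) x (hd n y) b
        - ((-1 : ℤ)) ^ ((m + 1) * (n + 1 + 1)) • circ (n + 1) m (hd n y) x b from fun b => rfl]
    rw [show (hd m x) = fun b => ((-1 : ℤ)) ^ (m + 1) • circ 2 m mu x b
        - circ m 2 x mu b from funext (hd_eq m x)]
    rw [show (hd n y) = fun b => ((-1 : ℤ)) ^ (n + 1) • circ 2 n mu y b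
        - circ n 2 y mu b from funext (hd_eq n y)]
    rw [circ_outer_smul_sub, circ_outer_smul_sub,
      circ_inner_smul_sub hy, circ_inner_smul_sub hx]
    have I1 := E2 hx n 2 y mu hy.1 (by omega) a
    rw [show n + 2 - 1 = n + 1 from by omega] at I1
    have I2 := E2 hx 2 n mu y (hmu (K := K)).1 (by omega) a
    rw [show m + 2 - 1 = m + 1 from by omega, show 2 + n - 1 = n + 1 from by omega] at I2
    have I3 := E2 hy m 2 x mu hx.1 (by omega) a
    rw [show n + m - 1 = m + n - 1 from by omega, show m + 2 - 1 = m + 1 from by omega] at I3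
    have I4 := E2 hy 2 m mu x (hmu (K := K)).1 (by omega) a
    rw [show n + 2 - 1 = n + 1 from by omega, show 2 + m - 1 = m + 1 from by omega] at I4
    have I5 := E2 (hmu (K := K)) m n x y hx.1 (by omega) a
    rw [show 2 + m - 1 = m + 1 from by omega] at I5
    have I6 := E2 (hmu (K := K)) n m y x hy.1 (by omega) a
    rw [show 2 + n - 1 = n + 1 from by omega, show n + m - 1 = m + n - 1 from by omega] at I6
    rw [I1, I3, I5, I2, I6, I4]
    rw [show m + n - 1 + 1 = m + n from by omega]
    rcases Nat.even_or_odd m with hm | hm <;> rcases Nat.even_or_odd n with hn | hn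
    · rw [show ((-1 : ℤ)) ^ (m + n) = 1 from Even.neg_one_pow (hm.add hn),
        show ((-1 : ℤ)) ^ ((m + 1) * (n + 1)) = -1 from Odd.neg_one_pow (Nat.odd_mul.mpr ⟨hm.add_one, hn.add_one⟩),
        show ((-1 : ℤ)) ^ ((m + 1 + 1) * (n + 1)) = 1 from Even.neg_one_pow (Nat.even_mul.mpr (Or.inl hm.add_one.add_one)),
        show ((-1 : ℤ)) ^ ((m + 1) * (n + 1 + 1)) = 1 from Even.neg_one_pow (Nat.even_mul.mpr (Or.inr hn.add_one.add_one)),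
        show ((-1 : ℤ)) ^ (n + 1) = -1 from Odd.neg_one_pow hn.add_one,
        show ((-1 : ℤ)) ^ (m + 1) = -1 from Odd.neg_one_pow hm.add_one,
        show ((-1 : ℤ)) ^ ((n + 1) * (2 + 1)) = -1 from Odd.neg_one_pow (Nat.odd_mul.mpr ⟨hn.add_one, (by decide : Odd (2 + 1))⟩),
        show ((-1 : ℤ)) ^ ((2 + 1) * (n + 1)) = -1 from Odd.neg_one_pow (Nat.odd_mul.mpr ⟨(by decide : Odd (2 + 1)), hn.add_one⟩),
        show ((-1 : ℤ)) ^ ((m + 1) * (2 + 1)) = -1 from Odd.neg_one_pow (Nat.odd_mul.mpr ⟨hm.add_one, (by decide : Odd (2 + 1))⟩),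
        show ((-1 : ℤ)) ^ ((2 + 1) * (m + 1)) = -1 from Odd.neg_one_pow (Nat.odd_mul.mpr ⟨(by decide : Odd (2 + 1)), hm.add_one⟩),
        show ((-1 : ℤ)) ^ ((n + 1) * (m + 1)) = -1 from Odd.neg_one_pow (Nat.odd_mul.mpr ⟨hn.add_one, hm.add_one⟩)]
      simp only [one_smul, neg_smul, neg_neg, smul_neg, sub_neg_eq_add]
      abel
    · rw [show ((-1 : ℤ)) ^ (m + n) = -1 from Odd.neg_one_pow (hm.add_odd hn),
        show ((-1 : ℤ)) ^ ((m + 1) * (n + 1)) = 1 from Even.neg_one_pow (Nat.even_mul.mpr (Or.inr hn.add_one)),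
        show ((-1 : ℤ)) ^ ((m + 1 + 1) * (n + 1)) = 1 from Even.neg_one_pow (Nat.even_mul.mpr (Or.inl hm.add_one.add_one)),
        show ((-1 : ℤ)) ^ ((m + 1) * (n + 1 + 1)) = -1 from Odd.neg_one_pow (Nat.odd_mul.mpr ⟨hm.add_one, hn.add_one.add_one⟩),
        show ((-1 : ℤ)) ^ (n + 1) = 1 from Even.neg_one_pow hn.add_one,
        show ((-1 : ℤ)) ^ (m + 1) = -1 from Odd.neg_one_pow hm.add_one,
        show ((-1 : ℤ)) ^ ((n + 1) * (2 + 1)) = 1 from Even.neg_one_pow (Nat.even_mul.mpr (Or.inl hn.add_one)),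
        show ((-1 : ℤ)) ^ ((2 + 1) * (n + 1)) = 1 from Even.neg_one_pow (Nat.even_mul.mpr (Or.inr hn.add_one)),
        show ((-1 : ℤ)) ^ ((m + 1) * (2 + 1)) = -1 from Odd.neg_one_pow (Nat.odd_mul.mpr ⟨hm.add_one, (by decide : Odd (2 + 1))⟩),
        show ((-1 : ℤ)) ^ ((2 + 1) * (m + 1)) = -1 from Odd.neg_one_pow (Nat.odd_mul.mpr ⟨(by decide : Odd (2 + 1)), hm.add_one⟩),
        show ((-1 : ℤ)) ^ ((n + 1) * (m + 1)) = 1 from Even.neg_one_pow (Nat.even_mul.mpr (Or.inl hn.add_one))]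
      simp only [one_smul, neg_smul, neg_neg, smul_neg, sub_neg_eq_add]
      abel
    · rw [show ((-1 : ℤ)) ^ (m + n) = -1 from Odd.neg_one_pow (hm.add_even hn),
        show ((-1 : ℤ)) ^ ((m + 1) * (n + 1)) = 1 from Even.neg_one_pow (Nat.even_mul.mpr (Or.inl hm.add_one)),
        show ((-1 : ℤ)) ^ ((m + 1 + 1) * (n + 1)) = -1 from Odd.neg_one_pow (Nat.odd_mul.mpr ⟨hm.add_one.add_one, hn.add_one⟩),
        show ((-1 : ℤ)) ^ ((m + 1) * (n + 1 + 1)) = 1 from Even.neg_one_pow (Nat.even_mul.mpr (Or.inl hm.add_one)),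
        show ((-1 : ℤ)) ^ (n + 1) = -1 from Odd.neg_one_pow hn.add_one,
        show ((-1 : ℤ)) ^ (m + 1) = 1 from Even.neg_one_pow hm.add_one,
        show ((-1 : ℤ)) ^ ((n + 1) * (2 + 1)) = -1 from Odd.neg_one_pow (Nat.odd_mul.mpr ⟨hn.add_one, (by decide : Odd (2 + 1))⟩),
        show ((-1 : ℤ)) ^ ((2 + 1) * (n + 1)) = -1 from Odd.neg_one_pow (Nat.odd_mul.mpr ⟨(by decide : Odd (2 + 1)), hn.add_one⟩),
        show ((-1 : ℤ)) ^ ((m + 1) * (2 + 1)) = 1 from Even.neg_one_pow (Nat.even_mul.mpr (Or.inl hm.add_one)),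
        show ((-1 : ℤ)) ^ ((2 + 1) * (m + 1)) = 1 from Even.neg_one_pow (Nat.even_mul.mpr (Or.inr hm.add_one)),
        show ((-1 : ℤ)) ^ ((n + 1) * (m + 1)) = 1 from Even.neg_one_pow (Nat.even_mul.mpr (Or.inr hm.add_one))]
      simp only [one_smul, neg_smul, neg_neg, smul_neg, sub_neg_eq_add]
      abel
    · rw [show ((-1 : ℤ)) ^ (m + n) = 1 from Even.neg_one_pow (hm.add_odd hn),
        show ((-1 : ℤ)) ^ ((m + 1) * (n + 1)) = 1 from Even.neg_one_pow (Nat.even_mul.mpr (Or.inl hm.add_one)),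
        show ((-1 : ℤ)) ^ ((m + 1 + 1) * (n + 1)) = 1 from Even.neg_one_pow (Nat.even_mul.mpr (Or.inr hn.add_one)),
        show ((-1 : ℤ)) ^ ((m + 1) * (n + 1 + 1)) = 1 from Even.neg_one_pow (Nat.even_mul.mpr (Or.inl hm.add_one)),
        show ((-1 : ℤ)) ^ (n + 1) = 1 from Even.neg_one_pow hn.add_one,
        show ((-1 : ℤ)) ^ (m + 1) = 1 from Even.neg_one_pow hm.add_one,
        show ((-1 : ℤ)) ^ ((n + 1) * (2 + 1)) = 1 from Even.neg_one_pow (Nat.even_mul.mpr (Or.inl hn.add_one)),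
        show ((-1 : ℤ)) ^ ((2 + 1) * (n + 1)) = 1 from Even.neg_one_pow (Nat.even_mul.mpr (Or.inr hn.add_one)),
        show ((-1 : ℤ)) ^ ((m + 1) * (2 + 1)) = 1 from Even.neg_one_pow (Nat.even_mul.mpr (Or.inl hm.add_one)),
        show ((-1 : ℤ)) ^ ((2 + 1) * (m + 1)) = 1 from Even.neg_one_pow (Nat.even_mul.mpr (Or.inr hm.add_one)),
        show ((-1 : ℤ)) ^ ((n + 1) * (m + 1)) = 1 from Even.neg_one_pow (Nat.even_mul.mpr (Or.inl hn.add_one))]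
      simp only [one_smul, neg_smul, neg_neg, smul_neg, sub_neg_eq_add]
      abel

end Part1
section Aux8
variable {K : Type*} [Field K] {A : Type*} [Ring A] [Algebra K A]

lemma ins_update_lt {p : ℕ} {y : (ℕ → A) → A} (a : ℕ → A) (k i : ℕ) (hik : i < k)
    (w : A) :
    ins p y k (Function.update a i w) = Function.update (ins p y k a) i w := by
  funext s
  rw [Function.update_apply]
  split_ifs with h
  · subst h
    rw [ins, if_pos hik, Function.update_self]
  · rcases lt_trichotomy s k with h' | h' | h'
    · rw [ins, if_pos h', Function.update_of_ne h, ins, if_pos h']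
    · subst h'
      rw [ins, if_neg (by omega), if_pos rfl, ins, if_neg (by omega), if_pos rfl]
      congr 1
      funext t
      rw [Function.update_of_ne (by omega)]
    · rw [ins, if_neg (by omega), if_neg (by omega), Function.update_of_ne (by omega),
        ins, if_neg (by omega), if_neg (by omega)]

lemma ins_update_mid {p : ℕ} {y : (ℕ → A) → A} (a : ℕ → A) (k i : ℕ) (hik : k ≤ i)
    (hip : i < k + p) (w : A) :
    ins p y k (Function.update a i w)
      = Function.update (ins p y k a) k
          (y (Function.update (fun t => a (t + k)) (i - k) w)) := by
  funext s
  rw [Function.update_apply]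
  split_ifs with h
  · subst h
    rw [ins, if_neg (by omega), if_pos rfl]
    congr 1
    funext t
    rw [Function.update_apply, Function.update_apply]
    by_cases ht : t + s = i
    · rw [if_pos ht, if_pos (by omega)]
    · rw [if_neg ht, if_neg (by omega)]
  · rcases lt_trichotomy s k with h' | h' | h'
    · rw [ins, if_pos h', Function.update_of_ne (by omega), ins, if_pos h']
    · exact absurd h' h
    · rw [ins, if_neg (by omega), if_neg (by omega), Function.update_of_ne (by omega),
        ins, if_neg (by omega), if_neg (by omega)]

lemma ins_update_ge {p : ℕ} {y : (ℕ → A) → A}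
    (hy1 : ∀ a b : ℕ → A, (∀ t, t < p → a t = b t) → y a = y b)
    (a : ℕ → A) (k i : ℕ) (hik : k + p ≤ i)
    (w : A) :
    ins p y k (Function.update a i w)
      = Function.update (ins p y k a) (i + 1 - p) w := by
  funext s
  rw [Function.update_apply]
  split_ifs with h
  · subst h
    rw [ins, if_neg (by omega), if_neg (by omega)]
    rw [show i + 1 - p - 1 + p = i from by omega, Function.update_self]
  · rcases lt_trichotomy s k with h' | h' | h'
    · rw [ins, if_pos h', Function.update_of_ne (by omega), ins, if_pos h']
    · subst h'
      rw [ins, if_neg (by omega), if_pos rfl, ins, if_neg (by omega), if_pos rfl]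
      refine hy1 _ _ (fun t ht => ?_)
      rw [Function.update_of_ne (by omega)]
    · rw [ins, if_neg (by omega), if_neg (by omega), Function.update_of_ne (by omega),
        ins, if_neg (by omega), if_neg (by omega)]

lemma circ_isCochain {m p : ℕ} {x y : (ℕ → A) → A}
    (hx : IsCochain K m x) (hy : IsCochain K p y) :
    IsCochain K (m + p - 1) (circ m p x y) := by
  refine ⟨fun a b h => ?_, fun a i hi u v => ?_, fun a i hi c u => ?_⟩
  · rw [circ_eq, circ_eq]
    refine Finset.sum_congr rfl (fun k hk => ?_)
    have hk' := Finset.mem_range.mp hk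
    congr 1
    refine hx.1 _ _ (fun s hs => ?_)
    rcases lt_trichotomy s k with h' | h' | h'
    · rw [ins, if_pos h', ins, if_pos h']
      exact h s (by omega)
    · subst h'
      rw [ins, if_neg (by omega), if_pos rfl, ins, if_neg (by omega), if_pos rfl]
      exact hy.1 _ _ (fun t ht => h (t + s) (by omega))
    · rw [ins, if_neg (by omega), if_neg (by omega), ins, if_neg (by omega), if_neg (by omega)]
      exact h _ (by omega)
  · rw [circ_eq, circ_eq, circ_eq, ← Finset.sum_add_distrib]
    refine Finset.sum_congr rfl (fun k hk => ?_)
    have hk' := Finset.mem_range.mp hk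
    rw [← smul_add]
    congr 1
    rcases lt_or_ge i k with h' | h'
    · rw [ins_update_lt a k i h' (u + v), ins_update_lt a k i h' u, ins_update_lt a k i h' v]
      exact hx.2.1 (ins p y k a) i (by omega) u v
    · rcases lt_or_ge i (k + p) with h'' | h''
      · rw [ins_update_mid a k i h' h'' (u + v), ins_update_mid a k i h' h'' u,
          ins_update_mid a k i h' h'' v,
          hy.2.1 (fun t => a (t + k)) (i - k) (by omega) u v]
        exact hx.2.1 (ins p y k a) k (by omega) _ _
      · rw [ins_update_ge hy.1 a k i h'' (u + v), ins_update_ge hy.1 a k i h'' u,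
          ins_update_ge hy.1 a k i h'' v]
        exact hx.2.1 (ins p y k a) (i + 1 - p) (by omega) u v
  · rw [circ_eq, circ_eq, Finset.smul_sum]
    refine Finset.sum_congr rfl (fun k hk => ?_)
    have hk' := Finset.mem_range.mp hk
    rw [smul_comm]
    congr 1
    rcases lt_or_ge i k with h' | h'
    · rw [ins_update_lt a k i h' (c • u), ins_update_lt a k i h' u]
      exact hx.2.2 (ins p y k a) i (by omega) c u
    · rcases lt_or_ge i (k + p) with h'' | h''
      · rw [ins_update_mid a k i h' h'' (c • u), ins_update_mid a k i h' h'' u,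
          hy.2.2 (fun t => a (t + k)) (i - k) (by omega) c u]
        exact hx.2.2 (ins p y k a) k (by omega) c _
      · rw [ins_update_ge hy.1 a k i h'' (c • u), ins_update_ge hy.1 a k i h'' u]
        exact hx.2.2 (ins p y k a) (i + 1 - p) (by omega) c u

lemma gbr_isCochain {m p : ℕ} {x y : (ℕ → A) → A}
    (hx : IsCochain K m x) (hy : IsCochain K p y) :
    IsCochain K (m + p - 1) (gbr m p x y) := by
  have h1 := circ_isCochain hx hy
  have h2 := circ_isCochain hy hx
  rw [show p + m - 1 = m + p - 1 from by omega] at h2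
  refine ⟨fun a b h => ?_, fun a i hi u v => ?_, fun a i hi c u => ?_⟩
  · show circ m p x y a - _ • circ p m y x a = circ m p x y b - _ • circ p m y x b
    rw [h1.1 a b h, h2.1 a b h]
  · show circ m p x y _ - _ • circ p m y x _ = (circ m p x y _ - _ • circ p m y x _)
      + (circ m p x y _ - _ • circ p m y x _)
    rw [h1.2.1 a i hi u v, h2.2.1 a i hi u v, smul_add]
    abel
  · show circ m p x y _ - _ • circ p m y x _ = c • (circ m p x y _ - _ • circ p m y x _)
    rw [h1.2.2 a i hi c u, h2.2.2 a i hi c u, smul_sub, smul_comm]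

end Aux8
/-- The Hochschild differential is compatible with the
Gerstenhaber bracket: for all `x ∈ C^m(A,A)` and `y ∈ C^n(A,A)`,
`d[x,y] = (−1)^{n+1}[dx,y] + [x,dy]`. In particular, the bracket of two
Hochschild cocycles is a cocycle, and the bracket of a cocycle with a
coboundary is a coboundary, so the Gerstenhaber bracket descends to
Hochschild cohomology. -/
theorem hochschild_differential_gerstenhaber_bracket_compat
    {K A : Type*} [Field K] [Ring A] [Algebra K A]
    (m n : ℕ) (x y : (ℕ → A) → A)
    (hx : IsCochain K m x) (hy : IsCochain K n y) :
    (hd (m + n - 1) (gbr m n x y) = fun a =>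
      ((-1 : ℤ) ^ (n + 1)) • gbr (m + 1) n (hd m x) y a
        + gbr m (n + 1) x (hd n y) a)
    ∧ (hd m x = (fun _ => 0) → hd n y = (fun _ => 0) →
        hd (m + n - 1) (gbr m n x y) = fun _ => 0)
    ∧ (hd m x = (fun _ => 0) →
        ∀ (q : ℕ) (w : (ℕ → A) → A), IsCochain K q w →
          ∃ u : (ℕ → A) → A, IsCochain K (m + q - 1) u ∧
            gbr m (q + 1) x (hd q w) = hd (m + q - 1) u) := by
  refine ⟨part1 m n x y hx hy, fun h2 h3 => ?_, fun h2 q w hw => ?_⟩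
  · rw [part1 m n x y hx hy]
    funext a
    rw [h2, h3]
    show ((-1 : ℤ)) ^ (n + 1) • (circ (m + 1) n (fun _ => 0) y a
        - ((-1 : ℤ)) ^ ((m + 1 + 1) * (n + 1)) • circ n (m + 1) y (fun _ => 0) a)
      + (circ m (n + 1) x (fun _ => 0) a
        - ((-1 : ℤ)) ^ ((m + 1) * (n + 1 + 1)) • circ (n + 1) m (fun _ => 0) x a) = 0
    rw [circ_zero_outer, circ_zero_outer, circ_zero_inner hy, circ_zero_inner hx]
    simp
  · refine ⟨gbr m q x w, gbr_isCochain hx hw, ?_⟩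
    rw [part1 m q x w hx hw]
    funext a
    rw [h2]
    show gbr m (q + 1) x (hd q w) a
      = ((-1 : ℤ)) ^ (q + 1) • gbr (m + 1) q (fun _ => 0) w a + gbr m (q + 1) x (hd q w) a
    have hz : gbr (m + 1) q (fun _ => 0) w a = 0 := by
      show circ (m + 1) q (fun _ => 0) w a
        - ((-1 : ℤ)) ^ ((m + 1 + 1) * (q + 1)) • circ q (m + 1) w (fun _ => 0) a = 0
      rw [circ_zero_outer, circ_zero_inner hw]
      simp
    rw [hz, smul_zero, zero_add]

end Hochschild
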